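/- arXiv:1912.10245 — 4 statements merged into one kernel-verified Lean document; each statement's English description precedes it below -/
import Mathlib

section
/- Let F_X = {X ⪰ 0 : A(X) = b} be a G-invariant spectrahedron (i.e., PXPᵀ ∈ F_X for all X ∈ F_X and P ∈ G). If W ⪰ 0 is an exposing vector of rank d for a face containing F_X (i.e., ⟨W, X⟩ = 0 for all X ∈ F_X), then W_G = (1/|G|) Σ_{P∈G} PᵀWP is also an exposing vector (⟨W_G, X⟩ = 0 for all X ∈ F_X), W_G lies in the commutant A_G, and rank(W_G) ≥ d. -/
/-
The Reynolds average `W_G` of `W` is a convex combination of the congruences `PᵀWP`. Each of them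
exposes `F` because `⟨PᵀWP, X⟩ = ⟨W, PXPᵀ⟩` and `F` is `G`-invariant; averaging over a group makes
`W_G` invariant under conjugation by `G`, i.e. it commutes with `G`. Finally every `PᵀWP` is
positive semidefinite, so a vector in the kernel of their sum lies in the kernel of each summand,
in particular in `ker W` (the summand `P = 1`); hence `rank W ≤ rank W_G`.
-/

open Matrix

/-- `P` is a permutation matrix. -/
def IsPermMatrix {n : ℕ} (P : Matrix (Fin n) (Fin n) ℝ) : Prop :=
  ∃ σ : Equiv.Perm (Fin n), ∀ i j, P i j = if i = σ j then 1 else 0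

theorem IsPermMatrix.exists_eq_permMatrix {n : ℕ} {P : Matrix (Fin n) (Fin n) ℝ}
    (h : IsPermMatrix P) : ∃ σ : Equiv.Perm (Fin n), P = σ.permMatrix ℝ := by
  obtain ⟨σ, hσ⟩ := h
  refine ⟨σ⁻¹, Matrix.ext fun i j => ?_⟩
  simp [hσ, PEquiv.toMatrix_apply, Equiv.Perm.inv_def, Equiv.eq_symm_apply, eq_comm]

theorem IsPermMatrix.transpose_mul_self {n : ℕ} {P : Matrix (Fin n) (Fin n) ℝ}
    (h : IsPermMatrix P) : Pᵀ * P = 1 := by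
  obtain ⟨σ, rfl⟩ := h.exists_eq_permMatrix
  rw [transpose_permMatrix, ← permMatrix_mul, mul_inv_cancel, permMatrix_one]

namespace Matrix

variable {ι m n K 𝕜 : Type*} [Fintype n]

theorem rank_le_rank_of_ker_le [Field K] {A B : Matrix m n K}
    (h : LinearMap.ker B.mulVecLin ≤ LinearMap.ker A.mulVecLin) : A.rank ≤ B.rank := by
  have hA := A.mulVecLin.finrank_range_add_finrank_ker
  have hB := B.mulVecLin.finrank_range_add_finrank_ker
  have hker := Submodule.finrank_mono h
  unfold rank
  omega

open scoped ComplexOrder in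
theorem ker_mulVecLin_sum_le_of_posSemidef [RCLike 𝕜] {s : Finset ι} {A : ι → Matrix n n 𝕜}
    (hA : ∀ i ∈ s, (A i).PosSemidef) {j : ι} (hj : j ∈ s) :
    LinearMap.ker (∑ i ∈ s, A i).mulVecLin ≤ LinearMap.ker (A j).mulVecLin := by
  intro x hx
  simp only [LinearMap.mem_ker, mulVecLin_apply, sum_mulVec] at hx ⊢
  have hsum : ∑ i ∈ s, star x ⬝ᵥ A i *ᵥ x = 0 := by
    rw [← dotProduct_sum, hx, dotProduct_zero]
  have hj_zero := (Finset.sum_eq_zero_iff_of_nonneg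
    fun i hi => (hA i hi).dotProduct_mulVec_nonneg x).1 hsum j hj
  exact ((hA j hj).dotProduct_mulVec_zero_iff x).1 hj_zero

end Matrix

section Reynolds

variable {n K : Type*} [Fintype n] [Field K]

def reynolds (G : Finset (Matrix n n K)) (W : Matrix n n K) : Matrix n n K :=
  (G.card : K)⁻¹ • ∑ P ∈ G, Pᵀ * W * P

theorem trace_transpose_reynolds_mul (G : Finset (Matrix n n K)) (W X : Matrix n n K) :
    trace ((reynolds G W)ᵀ * X) = (G.card : K)⁻¹ * ∑ P ∈ G, trace (Wᵀ * (P * X * Pᵀ)) := by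
  simp only [reynolds, transpose_smul, transpose_sum, transpose_mul, transpose_transpose,
    smul_mul, Finset.sum_mul, trace_smul, trace_sum, smul_eq_mul]
  congr 1
  refine Finset.sum_congr rfl fun P _ => ?_
  simpa only [Matrix.mul_assoc] using trace_mul_comm Pᵀ (Wᵀ * P * X)

section Group

variable [DecidableEq n] {G : Finset (Matrix n n K)} (horth : ∀ P ∈ G, Pᵀ * P = 1)
  (hmul : ∀ P ∈ G, ∀ Q ∈ G, P * Q ∈ G) (hinv : ∀ P ∈ G, Pᵀ ∈ G)
include horth hmul hinv

theorem transpose_mul_reynolds_mul (W : Matrix n n K) {P : Matrix n n K} (hP : P ∈ G) :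
    Pᵀ * reynolds G W * P = reynolds G W := by
  have hPPt : P * Pᵀ = 1 := mul_eq_one_comm.1 (horth P hP)
  have hreindex : ∑ Q ∈ G, (Q * P)ᵀ * W * (Q * P) = ∑ Q ∈ G, Qᵀ * W * Q :=
    Finset.sum_nbij' (· * P) (· * Pᵀ) (fun Q hQ => hmul Q hQ P hP)
      (fun Q hQ => hmul Q hQ Pᵀ (hinv P hP))
      (fun Q _ => by simp [Matrix.mul_assoc, hPPt])
      (fun Q _ => by simp [Matrix.mul_assoc, horth P hP])
      (fun _ _ => rfl)
  rw [reynolds, Matrix.mul_smul, Matrix.smul_mul, Finset.mul_sum, Finset.sum_mul, ← hreindex]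
  simp only [transpose_mul, Matrix.mul_assoc]

theorem mul_reynolds_eq_reynolds_mul (W : Matrix n n K) {P : Matrix n n K} (hP : P ∈ G) :
    P * reynolds G W = reynolds G W * P := by
  have hPPt : P * Pᵀ = 1 := mul_eq_one_comm.1 (horth P hP)
  calc P * reynolds G W = P * (Pᵀ * reynolds G W * P) := by
        rw [transpose_mul_reynolds_mul horth hmul hinv W hP]
    _ = reynolds G W * P := by rw [← Matrix.mul_assoc, ← Matrix.mul_assoc, hPPt, Matrix.one_mul]

end Group

theorem rank_le_rank_reynolds [DecidableEq n] {G : Finset (Matrix n n ℝ)} (hone : 1 ∈ G)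
    {W : Matrix n n ℝ} (hW : W.PosSemidef) : W.rank ≤ (reynolds G W).rank := by
  have hcard : (G.card : ℝ)⁻¹ ≠ 0 :=
    inv_ne_zero (Nat.cast_ne_zero.2 (Finset.card_ne_zero_of_mem hone))
  rw [reynolds, rank_smul_of_mem_nonZeroDivisors _ (mem_nonZeroDivisors_of_ne_zero hcard)]
  have hconj : ∀ P ∈ G, (Pᵀ * W * P).PosSemidef := fun P _ => by
    simpa only [conjTranspose_eq_transpose_of_trivial] using hW.conjTranspose_mul_mul_same P
  simpa using rank_le_rank_of_ker_le (ker_mulVecLin_sum_le_of_posSemidef hconj hone)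

end Reynolds

theorem reynolds_exposing_vector_general {n : ℕ}
    (G : Finset (Matrix (Fin n) (Fin n) ℝ))
    (hone : (1 : Matrix (Fin n) (Fin n) ℝ) ∈ G)
    (hperm : ∀ P ∈ G, IsPermMatrix P)
    (hmul : ∀ P ∈ G, ∀ Q ∈ G, P * Q ∈ G)
    (hinv : ∀ P ∈ G, Pᵀ ∈ G)
    (F : Set (Matrix (Fin n) (Fin n) ℝ))
    (hinvar : ∀ X ∈ F, ∀ P ∈ G, P * X * Pᵀ ∈ F)
    (W : Matrix (Fin n) (Fin n) ℝ) (hW : W.PosSemidef)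
    (d : ℕ) (hd : W.rank = d)
    (hexp : ∀ X ∈ F, Matrix.trace (Wᵀ * X) = 0) :
    let WG : Matrix (Fin n) (Fin n) ℝ := (G.card : ℝ)⁻¹ • ∑ P ∈ G, Pᵀ * W * P
    (∀ X ∈ F, Matrix.trace (WGᵀ * X) = 0) ∧
      (∀ P ∈ G, P * WG = WG * P) ∧ d ≤ WG.rank := by
  have horth : ∀ P ∈ G, Pᵀ * P = 1 := fun P hP => (hperm P hP).transpose_mul_self
  refine ⟨fun X hX => ?_, fun P hP => mul_reynolds_eq_reynolds_mul horth hmul hinv W hP,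
    hd ▸ rank_le_rank_reynolds hone hW⟩
  rw [← reynolds, trace_transpose_reynolds_mul,
    Finset.sum_eq_zero fun P hP => hexp _ (hinvar X hX P hP), mul_zero]

/-- If `F = {X ⪰ 0 : 𝒜(X) = b}` is a `G`-invariant spectrahedron and `W ⪰ 0` is an
exposing vector of rank `d` for a face containing `F` (i.e. `⟨W,X⟩ = 0` on `F`), then
`W_G = (1/|G|) Σ_{P∈G} PᵀWP` is also an exposing vector, lies in the commutant of `G`,
and has rank at least `d`. -/
theorem reynolds_exposing_vector {n m : ℕ}
    (𝒜 : Matrix (Fin n) (Fin n) ℝ →ₗ[ℝ] (Fin m → ℝ)) (b : Fin m → ℝ)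
    (G : Finset (Matrix (Fin n) (Fin n) ℝ))
    (hone : (1 : Matrix (Fin n) (Fin n) ℝ) ∈ G)
    (hperm : ∀ P ∈ G, IsPermMatrix P)
    (hmul : ∀ P ∈ G, ∀ Q ∈ G, P * Q ∈ G)
    (hinv : ∀ P ∈ G, Pᵀ ∈ G)
    (F : Set (Matrix (Fin n) (Fin n) ℝ))
    (hF : F = {X | X.PosSemidef ∧ 𝒜 X = b})
    (hinvar : ∀ X ∈ F, ∀ P ∈ G, P * X * Pᵀ ∈ F)
    (W : Matrix (Fin n) (Fin n) ℝ) (hW : W.PosSemidef)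
    (d : ℕ) (hd : W.rank = d)
    (hexp : ∀ X ∈ F, Matrix.trace (Wᵀ * X) = 0) :
    let WG : Matrix (Fin n) (Fin n) ℝ := (G.card : ℝ)⁻¹ • ∑ P ∈ G, Pᵀ * W * P
    (∀ X ∈ F, Matrix.trace (WGᵀ * X) = 0) ∧
      (∀ P ∈ G, P * WG = WG * P) ∧ d ≤ WG.rank :=
  reynolds_exposing_vector_general G hone hperm hmul hinv F hinvar W hW d hd hexp
end

section
/- The Krawtchouk polynomials K_i(j) = Σ_{h=0}^i (-1)^h (q-1)^{i-h} C(j,h) C(d-j, i-h) satisfy the orthogonality relation Σ_{j=0}^d K_r(j) K_s(j) C(d,j)(q-1)^j = q^d C(d,s)(q-1)^s δ_{r,s} for all r, s ∈ {0,...,d}. -/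
open Finset Polynomial

private lemma kraw_coeff_one_add_C_mul_X_pow {R : Type*} [CommRing R] (c : R) (m i : ℕ) :
    ((1 + Polynomial.C c * Polynomial.X) ^ m).coeff i = c ^ i * (m.choose i : R) := by
  rw [add_comm, add_pow, Polynomial.finset_sum_coeff]
  have h1 : ∀ k ∈ range (m + 1),
      ((Polynomial.C c * Polynomial.X) ^ k * 1 ^ (m - k) * (m.choose k : R[X])).coeff i
        = if i = k then c ^ k * (m.choose k : R) else 0 := by
    intro k hk
    rw [one_pow, mul_one, mul_pow, ← Polynomial.C_pow, ← Polynomial.C_eq_natCast,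
      Polynomial.coeff_mul_C, Polynomial.coeff_C_mul, Polynomial.coeff_X_pow]
    by_cases h : i = k <;> simp [h]
  rw [Finset.sum_congr rfl h1, Finset.sum_ite_eq (range (m + 1)) i]
  by_cases h : i ≤ m
  · simp [Nat.lt_succ_of_le h]
  · push_neg at h
    simp [Nat.choose_eq_zero_of_lt h, Nat.lt_succ_iff, h.not_ge]

private lemma kraw_coeff_one_sub_X_pow {R : Type*} [CommRing R] (j h : ℕ) :
    ((1 - Polynomial.X) ^ j : R[X]).coeff h = (-1) ^ h * (j.choose h : R) := by
  have e : (1 - Polynomial.X : R[X]) = 1 + Polynomial.C (-1) * Polynomial.X := by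
    simp [sub_eq_add_neg]
  rw [e, kraw_coeff_one_add_C_mul_X_pow]

private lemma kraw_ring_id {R : Type*} [CommRing R] (x y c : R) :
    c * ((1 - x) * (1 - y)) + (1 + c * x) * (1 + c * y) = (c + 1) * (1 + c * (x * y)) := by
  ring

/-- The Krawtchouk polynomials
`K_i(j) = Σ_{h=0}^i (-1)^h (q-1)^{i-h} C(j,h) C(d-j, i-h)` satisfy the orthogonality
relation `Σ_{j=0}^d K_r(j) K_s(j) C(d,j) (q-1)^j = q^d C(d,s) (q-1)^s δ_{r,s}`
for all `r, s ∈ {0,…,d}`. -/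
theorem krawtchouk_orthogonality (d q : ℕ) (hd : 1 ≤ d) (hq : 2 ≤ q) :
    let K : ℕ → ℕ → ℝ := fun i j =>
      ∑ h ∈ Finset.range (i + 1),
        (-1 : ℝ) ^ h * ((q : ℝ) - 1) ^ (i - h) * (j.choose h : ℝ) *
          (((d - j).choose (i - h) : ℝ))
    ∀ r s : ℕ, r ≤ d → s ≤ d →
      ∑ j ∈ Finset.range (d + 1), K r j * K s j * (d.choose j : ℝ) * ((q : ℝ) - 1) ^ j =
        if r = s then (q : ℝ) ^ d * (d.choose s : ℝ) * ((q : ℝ) - 1) ^ s else 0 := by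
  intro K r s hr hs
  set c : ℝ := (q : ℝ) - 1 with hc
  -- generating polynomial for column j
  set f : ℕ → ℝ[X] := fun j =>
    (1 + Polynomial.C c * Polynomial.X) ^ (d - j) * (1 - Polynomial.X) ^ j with hf
  have hK : ∀ i j, K i j = (f j).coeff i := by
    intro i j
    have e : f j = (1 - Polynomial.X) ^ j * (1 + Polynomial.C c * Polynomial.X) ^ (d - j) :=
      mul_comm _ _
    rw [e, Polynomial.coeff_mul, Finset.Nat.sum_antidiagonal_eq_sum_range_succ_mk]
    refine Finset.sum_congr rfl fun h hh => ?_
    rw [kraw_coeff_one_sub_X_pow, kraw_coeff_one_add_C_mul_X_pow]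
    ring
  -- the two-variable generating identity
  set X₁ : (ℝ[X])[X] := Polynomial.X with hX1
  set X₂ : (ℝ[X])[X] := Polynomial.C Polynomial.X with hX2
  set CC : ℝ → (ℝ[X])[X] := fun a => Polynomial.C (Polynomial.C a) with hCC
  have key : (∑ j ∈ Finset.range (d + 1),
        CC ((d.choose j : ℝ) * c ^ j) * Polynomial.C (f j) * (f j).map Polynomial.C)
      = CC ((q : ℝ) ^ d) * (1 + CC c * (X₁ * X₂)) ^ d := by
    have expand : ∀ j, CC ((d.choose j : ℝ) * c ^ j) * Polynomial.C (f j) * (f j).map Polynomial.C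
        = (CC c * ((1 - X₁) * (1 - X₂))) ^ j
          * ((1 + CC c * X₁) * (1 + CC c * X₂)) ^ (d - j)
          * ((d.choose j : (ℝ[X])[X])) := by
      intro j
      simp only [hf, hCC, hX1, hX2, Polynomial.map_mul, Polynomial.map_pow,
        Polynomial.map_add, Polynomial.map_one, Polynomial.map_sub, Polynomial.map_C,
        Polynomial.map_X, map_pow, map_mul, map_add, map_sub, map_one, map_natCast, mul_pow]
      ring
    rw [Finset.sum_congr rfl fun j _ => expand j, ← add_pow]
    rw [kraw_ring_id]
    have hq1 : c + 1 = (q : ℝ) := by rw [hc]; ring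
    have hb : (CC c + 1 : (ℝ[X])[X]) = CC ((q : ℝ)) := by
      rw [← hq1, hCC]; simp [map_add]
    rw [mul_pow, hb, hCC, ← map_pow, ← map_pow]
  -- take coefficients on both sides of `key`
  have lhs_co : ∀ j,
      (((CC ((d.choose j : ℝ) * c ^ j) * Polynomial.C (f j) * (f j).map Polynomial.C).coeff r).coeff s)
        = K r j * K s j * (d.choose j : ℝ) * c ^ j := by
    intro j
    rw [hCC]
    simp only [mul_assoc]
    rw [Polynomial.coeff_C_mul]
    rw [show (Polynomial.C (f j) * (f j).map Polynomial.C).coeff r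
        = f j * Polynomial.C ((f j).coeff r) by
      rw [Polynomial.coeff_C_mul, Polynomial.coeff_map]]
    rw [Polynomial.coeff_C_mul, Polynomial.coeff_mul_C, hK r j, hK s j]
    ring
  have rhs_co : (((CC ((q : ℝ) ^ d) * (1 + CC c * (X₁ * X₂)) ^ d).coeff r).coeff s)
      = if r = s then (q : ℝ) ^ d * (d.choose s : ℝ) * c ^ s else 0 := by
    have expand2 : (1 + CC c * (X₁ * X₂)) ^ d
        = ∑ k ∈ Finset.range (d + 1),
            Polynomial.C (Polynomial.C (c ^ k * (d.choose k : ℝ)) * Polynomial.X ^ k)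
              * Polynomial.X ^ k := by
      rw [add_comm, add_pow]
      refine Finset.sum_congr rfl fun k _ => ?_
      simp only [hCC, hX1, hX2, one_pow, mul_one, mul_pow, map_mul, map_pow, map_natCast]
      ring
    rw [expand2, hCC, Polynomial.coeff_C_mul, Polynomial.finset_sum_coeff]
    have h1 : ∀ k ∈ Finset.range (d + 1),
        (Polynomial.C (Polynomial.C (c ^ k * (d.choose k : ℝ)) * Polynomial.X ^ k)
          * Polynomial.X ^ k).coeff r
        = if r = k then Polynomial.C (c ^ k * (d.choose k : ℝ)) * Polynomial.X ^ k else 0 := by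
      intro k _
      rw [Polynomial.coeff_C_mul, Polynomial.coeff_X_pow]
      by_cases h : r = k <;> simp [h]
    rw [Finset.sum_congr rfl h1, Finset.sum_ite_eq (range (d + 1)) r]
    rw [if_pos (Finset.mem_range.mpr (Nat.lt_succ_of_le hr))]
    rw [Polynomial.coeff_C_mul, Polynomial.coeff_C_mul, Polynomial.coeff_X_pow]
    by_cases h : r = s
    · subst h
      simp [mul_comm, mul_assoc, mul_left_comm]
    · rw [if_neg h, if_neg (fun hsr : s = r => h hsr.symm)]
      simp
  calc ∑ j ∈ Finset.range (d + 1), K r j * K s j * (d.choose j : ℝ) * c ^ j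
      = ((( ∑ j ∈ Finset.range (d + 1),
          CC ((d.choose j : ℝ) * c ^ j) * Polynomial.C (f j) * (f j).map Polynomial.C).coeff r).coeff s) := by
        rw [Polynomial.finset_sum_coeff, Polynomial.finset_sum_coeff]
        exact (Finset.sum_congr rfl fun j _ => (lhs_co j).symm)
    _ = _ := by rw [key, rhs_co]
end

section
/- With U = (1/√n)(nI − J), the matrix W = [U⊗e_n, e_n⊗U][U⊗e_n, e_n⊗U]ᵀ equals I_n ⊗ nJ_n + J_n ⊗ (nI_n − 2J_n), is positive semidefinite of order n², and has rank 2(n−1). -/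
open Matrix
open scoped Kronecker

/-!
Write `P = nI − J`. Then `UUᵀ = P` and `EEᵀ = J`, so `W = P ⊗ J + J ⊗ P`, which is positive
semidefinite as a sum of Gram matrices. Since `PJ = JP = 0`, `P² = nP` and `J² = nJ`, we get
`W² = n²W`: thus `W / n²` is idempotent, and its rank equals its trace `2n²(n − 1) / n²`.
-/

namespace Matrix

variable {l m n p ι K R : Type*}

theorem IsIdempotentElem.rank_eq_trace [Fintype ι] [DecidableEq ι] [Field K]
    {A : Matrix ι ι K} (hA : IsIdempotentElem A) : (A.rank : K) = A.trace := by
  have hf : IsIdempotentElem A.toLin' := hA.map Matrix.toLinAlgEquiv'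
  rw [← trace_toLin'_eq, (LinearMap.IsIdempotentElem.isProj_range _ hf).trace, rank,
    toLin'_apply']

theorem rank_eq_trace_div_of_mul_self_eq_smul [Fintype ι] [DecidableEq ι] [Field K]
    {A : Matrix ι ι K} {c : K} (hc : c ≠ 0) (hA : A * A = c • A) :
    (A.rank : K) = A.trace / c := by
  have hidem : IsIdempotentElem (c⁻¹ • A) := by
    rw [IsIdempotentElem, smul_mul_smul_comm, hA, smul_smul, mul_assoc, inv_mul_cancel₀ hc,
      mul_one]
  rw [← rank_smul_of_mem_nonZeroDivisors A (mem_nonZeroDivisors_of_ne_zero (inv_ne_zero hc)),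
    hidem.rank_eq_trace, trace_smul, smul_eq_mul, div_eq_inv_mul]

section CommRing

variable [CommRing R]

theorem sub_kronecker (A₁ A₂ : Matrix l m R) (B : Matrix n p R) :
    (A₁ - A₂) ⊗ₖ B = A₁ ⊗ₖ B - A₂ ⊗ₖ B := by
  ext; simp [sub_mul]

theorem kronecker_sub (A : Matrix l m R) (B₁ B₂ : Matrix n p R) :
    A ⊗ₖ (B₁ - B₂) = A ⊗ₖ B₁ - A ⊗ₖ B₂ := by
  ext; simp [mul_sub]

theorem of_one_mul_of_one [Fintype m] :
    (of fun _ _ => 1 : Matrix l m R) * (of fun _ _ => 1 : Matrix m ι R) =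
      (Fintype.card m : R) • of fun _ _ => 1 := by
  ext
  simp [mul_apply]

theorem kronecker_add_kronecker_mul_self [Fintype ι] {A B : Matrix ι ι R} {c : R}
    (hAB : A * B = 0) (hBA : B * A = 0) (hA : A * A = c • A) (hB : B * B = c • B) :
    (A ⊗ₖ B + B ⊗ₖ A) * (A ⊗ₖ B + B ⊗ₖ A) = (c * c) • (A ⊗ₖ B + B ⊗ₖ A) := by
  simp only [add_mul, mul_add, ← mul_kronecker_mul, hAB, hBA, hA, hB, kronecker_zero,
    smul_kronecker, kronecker_smul, smul_smul]
  module

variable (ι R) [Fintype ι] [DecidableEq ι]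

def centering : Matrix ι ι R := (Fintype.card ι : R) • 1 - of fun _ _ => 1

def qapExposingMatrix : Matrix (ι × ι) (ι × ι) R :=
  centering ι R ⊗ₖ (of fun _ _ => 1) + (of fun _ _ => 1) ⊗ₖ centering ι R

variable {ι R}

theorem centering_mul_of_one : centering ι R * (of fun _ _ => 1 : Matrix ι m R) = 0 := by
  rw [centering, Matrix.sub_mul, Matrix.smul_mul, Matrix.one_mul, of_one_mul_of_one, sub_self]

theorem of_one_mul_centering : (of fun _ _ => 1 : Matrix m ι R) * centering ι R = 0 := by
  rw [centering, Matrix.mul_sub, Matrix.mul_smul, Matrix.mul_one, of_one_mul_of_one, sub_self]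

theorem centering_mul_self :
    centering ι R * centering ι R = (Fintype.card ι : R) • centering ι R := by
  conv_lhs => arg 2; rw [centering]
  rw [Matrix.mul_sub, centering_mul_of_one, sub_zero, Matrix.mul_smul, Matrix.mul_one]

theorem transpose_centering : (centering ι R)ᵀ = centering ι R := by
  rw [centering, transpose_sub, transpose_smul, transpose_one]
  rfl

theorem trace_centering :
    (centering ι R).trace = (Fintype.card ι : R) * Fintype.card ι - Fintype.card ι := by
  simp [centering, trace]

theorem qapExposingMatrix_eq :
    qapExposingMatrix ι R =
      (1 : Matrix ι ι R) ⊗ₖ ((Fintype.card ι : R) • of fun _ _ => 1) +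
        (of fun _ _ => 1) ⊗ₖ
          ((Fintype.card ι : R) • (1 : Matrix ι ι R) - (2 : R) • of fun _ _ => 1) := by
  simp only [qapExposingMatrix, centering, sub_kronecker, kronecker_sub, smul_kronecker,
    kronecker_smul]
  module

theorem qapExposingMatrix_mul_self :
    qapExposingMatrix ι R * qapExposingMatrix ι R =
      ((Fintype.card ι : R) * Fintype.card ι) • qapExposingMatrix ι R :=
  kronecker_add_kronecker_mul_self centering_mul_of_one of_one_mul_centering
    centering_mul_self of_one_mul_of_one

theorem trace_qapExposingMatrix :
    (qapExposingMatrix ι R).trace =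
      2 * ((Fintype.card ι : R) * Fintype.card ι * (Fintype.card ι - 1)) := by
  simp only [qapExposingMatrix, trace_add, trace_kronecker, trace_centering]
  simp [trace]
  ring

end CommRing

theorem rank_qapExposingMatrix [Fintype ι] [DecidableEq ι] [Nonempty ι] [Field K] [CharZero K] :
    (qapExposingMatrix ι K).rank = 2 * (Fintype.card ι - 1) := by
  have hk : (Fintype.card ι : K) ≠ 0 := by simp
  have h := rank_eq_trace_div_of_mul_self_eq_smul (mul_ne_zero hk hk) qapExposingMatrix_mul_self
  rw [trace_qapExposingMatrix, mul_div_assoc, mul_div_cancel_left₀ _ (mul_ne_zero hk hk)] at h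
  have hcast : ((2 * (Fintype.card ι - 1) : ℕ) : K) = 2 * ((Fintype.card ι : K) - 1) := by
    push_cast [Nat.cast_sub (Fintype.card_pos : 1 ≤ Fintype.card ι)]
    ring
  exact_mod_cast h.trans hcast.symm

theorem inv_sqrt_smul_centering_mul_transpose [Fintype ι] [DecidableEq ι] [Nonempty ι] :
    ((Real.sqrt (Fintype.card ι))⁻¹ • centering ι ℝ) *
        ((Real.sqrt (Fintype.card ι))⁻¹ • centering ι ℝ)ᵀ = centering ι ℝ := by
  rw [transpose_smul, transpose_centering, smul_mul_smul_comm, centering_mul_self, smul_smul,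
    ← mul_inv, Real.mul_self_sqrt (Nat.cast_nonneg _), inv_mul_cancel₀ (by simp), one_smul]

end Matrix

/-- With `U = (1/√n)(nI − J)`, the matrix
`W = [U⊗e_n, e_n⊗U][U⊗e_n, e_n⊗U]ᵀ = (U⊗e_n)(U⊗e_n)ᵀ + (e_n⊗U)(e_n⊗U)ᵀ`
equals `I_n ⊗ nJ_n + J_n ⊗ (nI_n − 2J_n)`, is positive semidefinite of order `n²`,
and has rank `2(n−1)`. -/
theorem qap_exposing_vector {n : ℕ} (hn : 2 ≤ n) :
    let U : Matrix (Fin n) (Fin n) ℝ :=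
      (Real.sqrt n)⁻¹ •
        ((n : ℝ) • (1 : Matrix (Fin n) (Fin n) ℝ) - Matrix.of fun _ _ => (1 : ℝ))
    let E : Matrix (Fin n) (Fin 1) ℝ := Matrix.of fun _ _ => (1 : ℝ)
    let J : Matrix (Fin n) (Fin n) ℝ := Matrix.of fun _ _ => (1 : ℝ)
    let W : Matrix (Fin n × Fin n) (Fin n × Fin n) ℝ :=
      (U ⊗ₖ E) * (U ⊗ₖ E)ᵀ + (E ⊗ₖ U) * (E ⊗ₖ U)ᵀ
    W = (1 : Matrix (Fin n) (Fin n) ℝ) ⊗ₖ ((n : ℝ) • J) +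
          J ⊗ₖ ((n : ℝ) • (1 : Matrix (Fin n) (Fin n) ℝ) - (2 : ℝ) • J) ∧
      W.PosSemidef ∧ W.rank = 2 * (n - 1) := by
  intro U E J W
  have : NeZero n := ⟨by omega⟩
  have hP : (n : ℝ) • 1 - J = centering (Fin n) ℝ := by simp [centering, J]
  have hW : W = qapExposingMatrix (Fin n) ℝ := by
    have hU : U = (Real.sqrt (Fintype.card (Fin n)))⁻¹ • centering (Fin n) ℝ := by
      rw [Fintype.card_fin, ← hP]
    have hEE : E * Eᵀ = of fun _ _ => 1 := (of_one_mul_of_one (m := Fin 1)).trans (by simp)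
    simp only [W, ← kroneckerMap_transpose, ← mul_kronecker_mul, hU,
      inv_sqrt_smul_centering_mul_transpose, hEE, qapExposingMatrix]
  refine ⟨?_, ?_, ?_⟩
  · simpa only [Fintype.card_fin] using hW.trans qapExposingMatrix_eq
  · simp only [W, ← conjTranspose_eq_transpose_of_trivial]
    exact (posSemidef_self_mul_conjTranspose _).add (posSemidef_self_mul_conjTranspose _)
  · rw [hW, rank_qapExposingMatrix, Fintype.card_fin]
end

section
/- For every n×n permutation matrix X, the vector y = vec(X) lies in the null space of W = I_n ⊗ nJ_n + J_n ⊗ (nI_n − 2J_n), i.e., ⟨W, vec(X)vec(X)ᵀ⟩ = 0. -/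
open Matrix
open scoped Kronecker

/-- For every `n×n` permutation matrix `X`, the vector `y = vec(X)` lies in the null
space of `W = I_n ⊗ nJ_n + J_n ⊗ (nI_n − 2J_n)`, i.e. `⟨W, vec(X) vec(X)ᵀ⟩ = 0`. -/
theorem vec_perm_in_null_space {n : ℕ}
    (X : Matrix (Fin n) (Fin n) ℝ) (hX : IsPermMatrix X) :
    let J : Matrix (Fin n) (Fin n) ℝ := Matrix.of fun _ _ => (1 : ℝ)
    let W : Matrix (Fin n × Fin n) (Fin n × Fin n) ℝ :=
      (1 : Matrix (Fin n) (Fin n) ℝ) ⊗ₖ ((n : ℝ) • J) +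
        J ⊗ₖ ((n : ℝ) • (1 : Matrix (Fin n) (Fin n) ℝ) - (2 : ℝ) • J)
    let v : Fin n × Fin n → ℝ := fun p => X p.2 p.1
    W.mulVec v = 0 ∧ Matrix.trace (Wᵀ * Matrix.vecMulVec v v) = 0 := by
  intro J W v
  obtain ⟨σ, hσ⟩ := hX
  have key : W.mulVec v = 0 := by
    funext p
    obtain ⟨i, j⟩ := p
    show ∑ q : Fin n × Fin n, W (i, j) q * v q = 0
    rw [Fintype.sum_prod_type]
    have : ∀ k l : Fin n, W (i, j) (k, l) * v (k, l)
        = (n : ℝ) * ((if i = k then 1 else 0) * (if l = σ k then 1 else 0))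
          + ((n : ℝ) * ((if j = l then 1 else 0) * (if l = σ k then 1 else 0))
            - 2 * (if l = σ k then 1 else 0)) := by
      intro k l
      simp only [W, J, v, Matrix.add_apply, Matrix.kroneckerMap_apply, Matrix.sub_apply,
        Matrix.smul_apply, Matrix.one_apply, Matrix.of_apply, smul_eq_mul, hσ]
      by_cases h1 : i = k <;> by_cases h2 : j = l <;> by_cases h3 : l = σ k <;>
        simp [h1, h2, h3]
    simp only [this, Finset.sum_add_distrib, Finset.sum_sub_distrib, ← Finset.mul_sum]
    have s1 : ∀ k : Fin n, ∑ l : Fin n, (if l = σ k then (1:ℝ) else 0) = 1 := by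
      intro k; simp
    have s2 : ∀ k : Fin n, ∑ l : Fin n,
        ((if j = l then (1:ℝ) else 0) * (if l = σ k then 1 else 0)) = if j = σ k then 1 else 0 := by
      intro k
      rw [Finset.sum_eq_single (σ k)]
      · simp
      · intro b _ hb; simp [hb]
      · simp
    have s3 : ∑ k : Fin n, (if j = σ k then (1:ℝ) else 0) = 1 := by
      rw [Finset.sum_eq_single (σ.symm j)]
      · simp
      · intro b _ hb
        have : j ≠ σ b := fun h => hb (by simp [h])
        simp [this]
      · simp
    have s4 : ∑ k : Fin n, (if i = k then (1:ℝ) else 0) = 1 := by simp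
    simp only [s1, s2, mul_one, s3, s4, Finset.sum_const, Finset.card_univ,
      Fintype.card_fin, nsmul_eq_mul]
    ring
  refine ⟨key, ?_⟩
  have : Matrix.trace (Wᵀ * Matrix.vecMulVec v v) = ∑ p, (W.mulVec v p) * v p := by
    simp only [Matrix.trace, Matrix.diag, Matrix.mul_apply, Matrix.transpose_apply,
      Matrix.vecMulVec_apply, Matrix.mulVec, dotProduct]
    rw [Finset.sum_comm]
    congr 1; funext q
    rw [Finset.sum_mul]
    congr 1; funext p
    ring
  rw [this, key]
  simp
end
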